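/- arXiv:1810.11216 — 2 statements merged into one kernel-verified Lean document; each statement's English description precedes it below -/
import Mathlib

section
/- For any real ε with 2/n < ε ≤ 1 and integer n ≥ 2, the quantity n·Σ_{i=1}^{⌈n(1−ε)⌉} 1/(n−i) − ⌈n(1−ε)⌉ is strictly less than n·ln(2/ε). -/
/-!
Write `m = ⌈n(1-ε)⌉` and `s = n - m`, so that `s ≤ nε < s + 1` and hence `s ≥ 2`.
Comparing each `1/k` with `log k - log (k-1)` gives `Σ_{i ≤ m} 1/(n-i) ≤ log (n/s) + 1/s - 1/n`.
Since `log (nε/s) ≤ nε/s - 1 < 1/s`, the left side of the claim is below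
`n log (2/ε) - n log 2 + 2n/s + s - n - 1`, and `2n/s + s ≤ n + 2` on `[2, n]` by convexity,
so the excess is at most `1 < n log 2`.
-/

open Real Finset

lemma one_div_le_log_sub_log_sub_one {k : ℝ} (hk : 1 < k) :
    1 / k ≤ log k - log (k - 1) := by
  have h := one_sub_inv_le_log_of_pos (show 0 < k / (k - 1) by apply div_pos <;> linarith)
  rw [log_div (by linarith) (by linarith), inv_div] at h
  have hk' : 1 - (k - 1) / k = 1 / k := by field_simp; ring
  linarith

lemma sum_Icc_one_div_sub_le (x : ℝ) (m : ℕ) (hm : (m : ℝ) + 1 ≤ x) :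
    ∑ i ∈ Icc 1 m, 1 / (x - i) ≤ log x - log (x - m) + 1 / (x - m) - 1 / x := by
  induction m with
  | zero => simp
  | succ m ih =>
    rw [sum_Icc_succ_top (by omega)]
    push_cast at hm ⊢
    have hstep := one_div_le_log_sub_log_sub_one (k := x - m) (by linarith)
    have hx : x - (m + 1) = x - m - 1 := by ring
    rw [hx]
    linarith [ih (by linarith)]

lemma log_sub_log_lt_one_div {s t : ℝ} (hs : 0 < s) (ht : 0 < t) (hts : t < s + 1) :
    log t - log s < 1 / s := by
  rw [← log_div ht.ne' hs.ne']
  have h : t / s - 1 < 1 / s := by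
    rw [div_sub_one hs.ne', div_lt_div_iff_of_pos_right hs]; linarith
  linarith [log_le_sub_one_of_pos (div_pos ht hs)]

lemma two_mul_div_add_le_add_two {n s : ℝ} (hs : 2 ≤ s) (hsn : s ≤ n) :
    2 * n / s + s ≤ n + 2 := by
  rw [← sub_nonneg]
  have h : n + 2 - (2 * n / s + s) = (s - 2) * (n - s) / s := by field_simp; ring
  rw [h]
  exact div_nonneg (mul_nonneg (by linarith) (by linarith)) (by linarith)

/-- For `2/n < ε ≤ 1` and `n ≥ 2`, the quantity
`n·Σ_{i=1}^{⌈n(1−ε)⌉} 1/(n−i) − ⌈n(1−ε)⌉` is strictly less than `n·ln(2/ε)`. -/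
theorem stmt8 (n : ℕ) (hn : 2 ≤ n) (ε : ℝ) (hε1 : 2 / n < ε) (hε2 : ε ≤ 1) :
    (n : ℝ) * ∑ i ∈ Finset.Icc 1 (⌈(n : ℝ) * (1 - ε)⌉₊), 1 / ((n : ℝ) - i)
        - (⌈(n : ℝ) * (1 - ε)⌉₊ : ℝ)
      < n * Real.log (2 / ε) := by
  set m := ⌈(n : ℝ) * (1 - ε)⌉₊
  have hn0 : (0 : ℝ) < n := by positivity
  have hnε : 2 < n * ε := by rwa [div_lt_iff₀ hn0, mul_comm] at hε1
  have hε0 : 0 < ε := lt_trans (by positivity) hε1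
  have hm_hi : (m : ℝ) < n * (1 - ε) + 1 := Nat.ceil_lt_add_one (by nlinarith)
  -- `n - m` is an integer exceeding `nε - 1 > 1`
  have hm2 : (m : ℝ) + 2 ≤ n := by
    have : (m : ℝ) + 1 < n := by nlinarith
    exact_mod_cast (show m + 2 ≤ n by exact_mod_cast this)
  have hsum := sum_Icc_one_div_sub_le n m (by linarith)
  have hlog : log (2 / ε) = log 2 + log n - log (n * ε) := by
    rw [log_div two_ne_zero (by positivity), log_mul hn0.ne' (by positivity)]; ring
  have hratio : log (n * ε) - log (n - m) < 1 / (n - m) :=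
    log_sub_log_lt_one_div (by linarith) (by positivity) (by linarith)
  have hconvex : 2 * (n : ℝ) * (1 / (n - m)) + (n - m) ≤ n + 2 := by
    rw [mul_one_div]; exact two_mul_div_add_le_add_two (by linarith) (by simp)
  have hlog2 : 1 < (n : ℝ) * log 2 := by
    have : (2 : ℝ) ≤ n := by exact_mod_cast hn
    nlinarith [log_two_gt_d9]
  have hmul := mul_le_mul_of_nonneg_left hsum hn0.le
  have hn_div_n : (n : ℝ) * (1 / n) = 1 := by field_simp
  rw [hlog]
  linarith [mul_lt_mul_of_pos_left hratio hn0]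
end

section
/- Let M be a matroid, K a subset of elements with known distinct positive weights, U the remaining elements with unknown weights, and I*_K the maximum-weight independent set within K. Then the set 𝒦 of elements of I*_K that can leave the optimal solution under some assignment of weights to U has cardinality at most min(|U|, |I*_K|). -/
/-!
Give the elements outside `K` distinct weights exceeding every weight in `K`, and let `B` be the
resulting optimum. With distinct positive weights an element lies in the optimum exactly when it
is not spanned by heavier elements. Hence `B ∩ K ⊆ I*_K`; and since raising the weights outside
`K` only enlarges the set of elements heavier than a given `x ∈ K`, every `x` that leaves the
optimum for some weighting is outside `B`. As `B` is a basis, `|I*_K \ B| ≤ |B \ I*_K|`, and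
`B \ I*_K ⊆ U`.
-/

open Set Function

lemma exists_injective_extension_heavy_off {α : Type*} [Countable α] {K : Set α}
    (hK : K.Finite) {w₀ : α → ℝ} (hpos : ∀ x ∈ K, 0 < w₀ x) (hinj : InjOn w₀ K) :
    ∃ w : α → ℝ, EqOn w w₀ K ∧ (∀ x, 0 < w x) ∧ Injective w ∧ ∀ x ∈ K, ∀ y ∉ K, w x < w y := by
  classical
  obtain ⟨C, hC⟩ := (hK.image w₀).bddAbove
  obtain ⟨f, hf⟩ := exists_injective_nat α
  have hbound : ∀ x ∈ K, ∀ n : ℕ, w₀ x < |C| + 1 + n := fun x hx n => by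
    linarith [hC (mem_image_of_mem w₀ hx), le_abs_self C, (Nat.cast_nonneg n : (0 : ℝ) ≤ n)]
  refine ⟨fun y => if y ∈ K then w₀ y else |C| + 1 + f y, fun x hx => if_pos hx, fun x => ?_,
    fun x y hxy => ?_, fun x hx y hy => ?_⟩
  · by_cases hx : x ∈ K
    · simpa [hx] using hpos x hx
    · simp only [hx, if_false]
      positivity
  · by_cases hx : x ∈ K <;> by_cases hy : y ∈ K <;> simp only [hx, hy, if_true, if_false] at hxy
    · exact hinj hx hy hxy
    · exact absurd hxy (hbound x hx _).ne
    · exact absurd hxy.symm (hbound y hy _).ne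
    · exact hf (by exact_mod_cast add_left_cancel hxy)
  · simpa [hx, hy] using hbound x hx (f y)

namespace Matroid

variable {α : Type*} {M : Matroid α} {w : α → ℝ} {I : Set α} {e : α}

def IsMaxWeight (M : Matroid α) (w : α → ℝ) (I : Set α) : Prop :=
  M.Indep I ∧ ∀ J, M.Indep J → ∑ᶠ x ∈ J, w x ≤ ∑ᶠ x ∈ I, w x

lemma IsMaxWeight.congr {w' : α → ℝ} (hI : M.IsMaxWeight w I) (h : EqOn w w' M.E) :
    M.IsMaxWeight w' I := by
  refine ⟨hI.1, fun J hJ => ?_⟩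
  rw [finsum_mem_congr rfl fun x hx => (h (hJ.subset_ground hx)).symm,
    finsum_mem_congr rfl fun x hx => (h (hI.1.subset_ground hx)).symm]
  exact hI.2 J hJ

lemma exists_isMaxWeight (M : Matroid α) [M.Finite] (w : α → ℝ) : ∃ I, M.IsMaxWeight w I := by
  obtain ⟨I, hI, hmax⟩ := exists_max_image {I | M.Indep I} (fun I => ∑ᶠ x ∈ I, w x)
    (M.ground_finite.finite_subsets.subset fun _ hI => hI.subset_ground) ⟨∅, M.empty_indep⟩
  exact ⟨I, hI, hmax⟩

lemma IsMaxWeight.isBase [M.RankFinite] (hI : M.IsMaxWeight w I) (hpos : ∀ x ∈ M.E, 0 < w x) :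
    M.IsBase I := by
  by_contra hnotBase
  obtain ⟨B, hB⟩ := M.exists_isBase
  obtain ⟨e, he, hins⟩ := hI.1.exists_insert_of_not_isBase hnotBase hB
  have hle := hI.2 _ hins
  rw [finsum_mem_insert _ he.2 hI.1.finite] at hle
  linarith [hpos e (hB.subset_ground he.1)]

lemma IsMaxWeight.mem_closure_heavier [M.RankFinite] (hI : M.IsMaxWeight w I)
    (hpos : ∀ x ∈ M.E, 0 < w x) (hinj : InjOn w M.E) (he : e ∈ M.E) (heI : e ∉ I) :
    e ∈ M.closure {y ∈ I | w e < w y} := by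
  have hB := hI.isBase hpos
  have hecl : e ∈ M.closure I := by rwa [hB.closure_eq]
  have hC : M.IsCircuit (M.fundCircuit e I) := hB.fundCircuit_isCircuit he heI
  -- exchanging `e` for any other element of its fundamental circuit must not increase the weight
  have hheavy : M.fundCircuit e I \ {e} ⊆ {y ∈ I | w e < w y} := by
    rintro z ⟨hzC, hze⟩
    have hzI : z ∈ I := (M.fundCircuit_subset_insert e I hzC).resolve_left hze
    have hexch := (hB.indep.mem_fundCircuit_iff hecl heI).1 hzC
    have hfin : (I \ {z}).Finite := hI.1.finite.sdiff
    have hle := hI.2 _ hexch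
    rw [← insert_sdiff_singleton_comm (Ne.symm hze), finsum_mem_insert _ (fun h => heI h.1) hfin,
      ← insert_sdiff_self_of_mem hzI, finsum_mem_insert _ (fun h => h.2 rfl) hfin,
      insert_sdiff_self_of_mem hzI] at hle
    refine ⟨hzI, lt_of_le_of_ne (by linarith) fun h => hze ?_⟩
    exact hinj (hI.1.subset_ground hzI) he h.symm
  exact M.closure_subset_closure hheavy
    (hC.mem_closure_sdiff_singleton_of_mem (M.mem_fundCircuit e I))

lemma IsMaxWeight.mem_iff_notMem_closure_heavier [M.RankFinite] (hI : M.IsMaxWeight w I)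
    (hpos : ∀ x ∈ M.E, 0 < w x) (hinj : InjOn w M.E) (he : e ∈ M.E) :
    e ∈ I ↔ e ∉ M.closure {y ∈ M.E | w e < w y} := by
  refine ⟨fun heI hecl => ?_, fun hecl => by_contra fun heI => hecl ?_⟩
  · have hspan : {y ∈ M.E | w e < w y} ⊆ M.closure (I \ {e}) := by
      rintro y ⟨hyE, hy⟩
      have hye : y ≠ e := by rintro rfl; exact lt_irrefl _ hy
      by_cases hyI : y ∈ I
      · exact M.subset_closure _ (sdiff_subset.trans hI.1.subset_ground) ⟨hyI, hye⟩
      · refine M.closure_subset_closure ?_ (hI.mem_closure_heavier hpos hinj hyE hyI)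
        rintro z ⟨hzI, hz⟩
        exact ⟨hzI, by rintro rfl; exact lt_asymm hy hz⟩
    exact hI.1.notMem_closure_sdiff_of_mem heI
      (M.closure_subset_closure_of_subset_closure hspan hecl)
  · refine M.closure_subset_closure ?_ (hI.mem_closure_heavier hpos hinj he heI)
    exact fun y hy => ⟨hI.1.subset_ground hy.1, hy.2⟩

lemma IsMaxWeight.mem_of_heavier_subset [M.RankFinite] {w' : α → ℝ} {I' : Set α}
    (hI : M.IsMaxWeight w I) (hI' : M.IsMaxWeight w' I') (hpos : ∀ x ∈ M.E, 0 < w x)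
    (hinj : InjOn w M.E) (hpos' : ∀ x ∈ M.E, 0 < w' x) (hinj' : InjOn w' M.E) (heI' : e ∈ I')
    (hheavier : {y ∈ M.E | w e < w y} ⊆ {y ∈ M.E | w' e < w' y}) : e ∈ I := by
  have he := hI'.1.subset_ground heI'
  refine (hI.mem_iff_notMem_closure_heavier hpos hinj he).2 fun hecl => ?_
  exact (hI'.mem_iff_notMem_closure_heavier hpos' hinj' he).1 heI'
    (M.closure_subset_closure hheavier hecl)

lemma IsMaxWeight.inter_subset_of_isMaxWeight_restrict [M.RankFinite] {B K : Set α}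
    (hB : M.IsMaxWeight w B) (hI : (M ↾ K).IsMaxWeight w I) (hK : K ⊆ M.E)
    (hpos : ∀ x ∈ M.E, 0 < w x) (hinj : InjOn w M.E) : B ∩ K ⊆ I := by
  rintro e ⟨heB, heK⟩
  by_contra heI
  have he := hI.mem_closure_heavier (fun x hx => hpos x (hK hx)) (hinj.mono hK) heK heI
  rw [restrict_closure_eq _ ((sep_subset I _).trans (show I ⊆ K from hI.1.subset_ground)) hK] at he
  refine (hB.mem_iff_notMem_closure_heavier hpos hinj (hK heK)).1 heB
    (M.closure_subset_closure ?_ he.1)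
  exact fun y hy => ⟨hK (hI.1.subset_ground hy.1), hy.2⟩

lemma Indep.ncard_sdiff_le_ncard_sdiff_of_isBase [M.RankFinite] {B : Set α} (hI : M.Indep I)
    (hB : M.IsBase B) : (I \ B).ncard ≤ (B \ I).ncard := by
  obtain ⟨B', hB', hIB'⟩ := hI.exists_isBase_superset
  refine (ncard_le_ncard_iff_ncard_sdiff_le_ncard_sdiff hI.finite hB.finite).1 ?_
  exact (ncard_le_ncard hIB' hB'.finite).trans (hB'.ncard_eq_ncard_of_isBase hB).le

end Matroid

open Matroid in
theorem stmt12_general {α : Type*} [Fintype α] (M : Matroid α) (K U : Set α)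
    (hE : M.E = K ∪ U)
    (w0 : α → ℝ) (hw0pos : ∀ x ∈ K, 0 < w0 x) (hw0inj : Set.InjOn w0 K)
    (IK : Set α) (hIK : IK ⊆ K) (hIKindep : M.Indep IK)
    (hIKmax : ∀ J ⊆ K, M.Indep J → ∑ᶠ x ∈ J, w0 x ≤ ∑ᶠ x ∈ IK, w0 x) :
    ({x ∈ IK | ∃ w : α → ℝ,
        (∀ y ∈ K, w y = w0 y) ∧ (∀ y ∈ M.E, 0 < w y) ∧ Set.InjOn w M.E ∧
        ∀ I : Set α, (I ⊆ M.E ∧ M.Indep I ∧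
            ∀ J : Set α, M.Indep J → ∑ᶠ y ∈ J, w y ≤ ∑ᶠ y ∈ I, w y) →
          x ∉ I} : Set α).ncard ≤ min U.ncard IK.ncard := by
  have hKE : K ⊆ M.E := hE ▸ subset_union_left
  obtain ⟨ws, hwsK, hwspos, hwsinj, hws_heavy⟩ :=
    exists_injective_extension_heavy_off K.toFinite hw0pos hw0inj
  have hwspos' : ∀ x ∈ M.E, 0 < ws x := fun x _ => hwspos x
  obtain ⟨B, hB⟩ := M.exists_isMaxWeight ws
  have hIKopt : (M ↾ K).IsMaxWeight ws IK :=
    IsMaxWeight.congr ⟨restrict_indep_iff.2 ⟨hIKindep, hIK⟩, fun J hJ =>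
      hIKmax J (restrict_indep_iff.1 hJ).2 (restrict_indep_iff.1 hJ).1⟩ hwsK.symm
  have hBU : B \ IK ⊆ U := by
    rintro y ⟨hyB, hyIK⟩
    rcases hE ▸ hB.1.subset_ground hyB with hyK | hyU
    · exact absurd (hB.inter_subset_of_isMaxWeight_restrict hIKopt hKE hwspos' hwsinj.injOn
        ⟨hyB, hyK⟩) hyIK
    · exact hyU
  refine le_min ((ncard_le_ncard (t := IK \ B) ?_).trans ?_) (ncard_le_ncard fun x hx => hx.1)
  · rintro x ⟨hxIK, w, hwK, hwpos, hwinj, hleaves⟩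
    obtain ⟨I, hI⟩ := M.exists_isMaxWeight w
    refine ⟨hxIK, fun hxB => hleaves I ⟨hI.1.subset_ground, hI⟩
      (hI.mem_of_heavier_subset hB hwpos hwinj hwspos' hwsinj.injOn hxB ?_)⟩
    have hxK := hIK hxIK
    rintro y ⟨hyE, hy⟩
    refine ⟨hyE, ?_⟩
    by_cases hyK : y ∈ K
    · rwa [hwsK hxK, hwsK hyK, ← hwK x hxK, ← hwK y hyK]
    · exact hws_heavy x hxK y hyK
  · exact (hIKindep.ncard_sdiff_le_ncard_sdiff_of_isBase (hB.isBase hwspos')).trans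
      (ncard_le_ncard hBU)

/-- Let `M` be a matroid whose ground set is partitioned into a set `K` of
elements with known distinct positive weights `w0` and a set `U` of elements
with unknown weights, and let `IK` be the maximum-weight independent set within
`K`. The set of elements of `IK` that can leave the optimal solution under some
assignment of (distinct, positive) weights to the elements of `U` has
cardinality at most `min |U| |IK|`. -/
theorem stmt12 {α : Type*} [Fintype α] (M : Matroid α) (K U : Set α)
    (hE : M.E = K ∪ U) (hdisj : Disjoint K U)
    (w0 : α → ℝ) (hw0pos : ∀ x ∈ K, 0 < w0 x) (hw0inj : Set.InjOn w0 K)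
    (IK : Set α) (hIK : IK ⊆ K) (hIKindep : M.Indep IK)
    (hIKmax : ∀ J ⊆ K, M.Indep J → ∑ᶠ x ∈ J, w0 x ≤ ∑ᶠ x ∈ IK, w0 x) :
    ({x ∈ IK | ∃ w : α → ℝ,
        (∀ y ∈ K, w y = w0 y) ∧ (∀ y ∈ M.E, 0 < w y) ∧ Set.InjOn w M.E ∧
        ∀ I : Set α, (I ⊆ M.E ∧ M.Indep I ∧
            ∀ J : Set α, M.Indep J → ∑ᶠ y ∈ J, w y ≤ ∑ᶠ y ∈ I, w y) →
          x ∉ I} : Set α).ncard ≤ min U.ncard IK.ncard :=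
  stmt12_general M K U hE w0 hw0pos hw0inj IK hIK hIKindep hIKmax
end
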